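/- arXiv:2009.00669 — 2 statements merged into one kernel-verified Lean document; each statement's English description precedes it below -/
import Mathlib

section
/- The Jaccard distance d(A,B) = 1 − |A ∩ B| / |A ∪ B| (with d(∅,∅) = 0) defines a metric on the collection of finite subsets of a given type; in particular it satisfies the triangle inequality d(A,C) ≤ d(A,B) + d(B,C). -/
/-!
Rewrite the distance as `d(A, B) = |A ∆ B| / |A ∪ B|`. With `U = A ∪ B ∪ C`, enlarging numerator
and denominator of `|A ∆ C| / |A ∪ C|` by `|B \ (A ∪ C)|` gives a fraction over `|U|`. Every point of
`A ∆ C` lies in `A ∆ B` or `B ∆ C`, and every point of `B \ (A ∪ C)` lies in both, so the new numerator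
is at most `|A ∆ B| + |B ∆ C|`; shrinking the common denominator `|U|` back to `|A ∪ B|` and
`|B ∪ C|` only increases the two resulting fractions.
-/

/-- Jaccard distance on finite sets, with `jaccard ∅ ∅ = 0`. -/
noncomputable def jaccard {α : Type*} [DecidableEq α] (A B : Finset α) : ℝ :=
  if A ∪ B = ∅ then 0 else 1 - ((A ∩ B).card : ℝ) / ((A ∪ B).card : ℝ)

open Finset
open scoped symmDiff

lemma div_le_add_div_add {K : Type*} [Field K] [LinearOrder K] [IsStrictOrderedRing K]
    {x y z : K} (hx : 0 ≤ x) (hxy : x ≤ y) (hz : 0 ≤ z) : x / y ≤ (x + z) / (y + z) := by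
  rcases hxy.lt_or_eq with hxy | rfl
  · have hy : 0 < y := hx.trans_lt hxy
    rw [div_le_div_iff₀ hy (by linarith)]
    nlinarith
  · rcases hx.lt_or_eq with hx | rfl
    · rw [div_self hx.ne', div_self (by linarith)]
    · simpa using div_nonneg hz hz

section

variable {α : Type*} [DecidableEq α]

lemma card_symmDiff_add_card_inter (A B : Finset α) : #(A ∆ B) + #(A ∩ B) = #(A ∪ B) := by
  rw [symmDiff_eq_sup_sdiff_inf]
  exact card_sdiff_add_card_eq_card inter_subset_union

lemma card_symmDiff_add_card_sdiff_union_le (A B C : Finset α) :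
    #(A ∆ C) + #(B \ (A ∪ C)) ≤ #(A ∆ B) + #(B ∆ C) :=
  calc #(A ∆ C) + #(B \ (A ∪ C)) ≤ #(A ∆ B ∪ B ∆ C) + #(A ∆ B ∩ B ∆ C) := by
        gcongr
        · exact symmDiff_triangle A B C
        · intro x hx
          simp only [mem_sdiff, mem_union, not_or] at hx
          simp [mem_symmDiff, hx]
    _ = #(A ∆ B) + #(B ∆ C) := card_union_add_card_inter _ _

-- Holds also for `A = B = ∅`, as both sides are then `0 / 0 = 0`.
lemma jaccard_eq_card_symmDiff_div (A B : Finset α) :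
    jaccard A B = #(A ∆ B) / #(A ∪ B) := by
  have hcard : (#(A ∆ B) : ℝ) + #(A ∩ B) = #(A ∪ B) := by
    exact_mod_cast card_symmDiff_add_card_inter A B
  rw [jaccard]
  split_ifs with h
  · simp [h]
  · have hU : (#(A ∪ B) : ℝ) ≠ 0 := by simpa [card_eq_zero] using h
    rw [← hcard] at hU ⊢
    field_simp
    ring

lemma jaccard_self (A : Finset α) : jaccard A A = 0 := by
  simp [jaccard_eq_card_symmDiff_div]

lemma jaccard_comm (A B : Finset α) : jaccard A B = jaccard B A := by
  rw [jaccard_eq_card_symmDiff_div, jaccard_eq_card_symmDiff_div, symmDiff_comm, union_comm]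

lemma eq_of_jaccard_eq_zero {A B : Finset α} (h : jaccard A B = 0) : A = B := by
  rw [jaccard_eq_card_symmDiff_div, div_eq_zero_iff, Nat.cast_eq_zero, Nat.cast_eq_zero,
    card_eq_zero, card_eq_zero, symmDiff_eq_empty, union_eq_empty] at h
  rcases h with h | ⟨rfl, rfl⟩
  exacts [h, rfl]

lemma jaccard_nonneg (A B : Finset α) : 0 ≤ jaccard A B := by
  rw [jaccard_eq_card_symmDiff_div]
  positivity

lemma card_symmDiff_div_le_jaccard {A B U : Finset α} (h : A ∪ B ⊆ U) :
    (#(A ∆ B) : ℝ) / #U ≤ jaccard A B := by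
  rw [jaccard_eq_card_symmDiff_div]
  rcases (A ∪ B).eq_empty_or_nonempty with hAB | hAB
  · have : A ∆ B = ∅ := subset_empty.mp (hAB ▸ symmDiff_subset_union)
    simp [this]
  · exact div_le_div_of_nonneg_left (by positivity) (by exact_mod_cast hAB.card_pos)
      (by exact_mod_cast card_le_card h)

lemma jaccard_triangle (A B C : Finset α) : jaccard A C ≤ jaccard A B + jaccard B C := by
  set U := B ∪ (A ∪ C)
  have hU : (#(A ∪ C) : ℝ) + #(B \ (A ∪ C)) = #U := by
    rw [add_comm]; exact_mod_cast card_sdiff_add_card B (A ∪ C)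
  have hnum : (#(A ∆ C) : ℝ) + #(B \ (A ∪ C)) ≤ #(A ∆ B) + #(B ∆ C) := by
    exact_mod_cast card_symmDiff_add_card_sdiff_union_le A B C
  calc jaccard A C = #(A ∆ C) / #(A ∪ C) := jaccard_eq_card_symmDiff_div A C
    _ ≤ (#(A ∆ C) + #(B \ (A ∪ C))) / #U := by
        rw [← hU]
        exact div_le_add_div_add (by positivity)
          (by exact_mod_cast card_le_card symmDiff_subset_union) (by positivity)
    _ ≤ (#(A ∆ B) + #(B ∆ C)) / #U := by gcongr
    _ = #(A ∆ B) / #U + #(B ∆ C) / #U := add_div _ _ _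
    _ ≤ jaccard A B + jaccard B C := by
        gcongr <;> apply card_symmDiff_div_le_jaccard <;> intro x <;> simp only [U, mem_union] <;> tauto

end

theorem stmt_2 {α : Type*} [DecidableEq α] :
    (∀ A : Finset α, jaccard A A = 0) ∧
    (∀ A B : Finset α, jaccard A B = 0 → A = B) ∧
    (∀ A B : Finset α, jaccard A B = jaccard B A) ∧
    (∀ A B : Finset α, 0 ≤ jaccard A B) ∧
    (∀ A B C : Finset α, jaccard A C ≤ jaccard A B + jaccard B C) :=
  ⟨jaccard_self, fun _ _ => eq_of_jaccard_eq_zero, jaccard_comm, jaccard_nonneg, jaccard_triangle⟩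
end

section
/- Let G_cmd = (V_cmd, E_cmd) be a finite graph of command nodes and ρ : ℕ → Set(V_cmd) a schedule of command-node activations satisfying: (a) if j ∈ ρ(t) and k ∈ N_j then k ∉ ρ(t) (neighbors never simultaneously active), and (b) every node is active infinitely often. For each node j let τ_j : ℕ → Set(E_j) be a schedule on its local edge set E_j ⊆ E such that τ_j(t) is always a matching in the local graph G_j. Suppose further that whenever j ≠ k and E_j and E_k contain a pair of adjacent edges of G, then jk ∈ E_cmd. Then the merged schedule τ(t) = ∪_{j ∈ ρ(t)} τ_j(t) is a matching in G at every time t. -/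
/-!
Two distinct edges of the merged schedule either come from the same active command node, where they
are disjoint because the local schedule is a matching, or from two distinct active nodes. In the
latter case a shared vertex would make the two nodes adjacent in the command graph, and adjacent
nodes are never active at the same time.
-/

theorem Set.pairwise_biUnion_of_forall_ne {α J : Type*} {r : α → α → Prop} {S : Set J}
    {f : J → Set α} (hf : ∀ j ∈ S, (f j).Pairwise r)
    (hcross : ∀ j ∈ S, ∀ k ∈ S, j ≠ k → ∀ a ∈ f j, ∀ b ∈ f k, r a b) :
    (⋃ j ∈ S, f j).Pairwise r := by
  intro a ha b hb hab
  simp only [Set.mem_iUnion] at ha hb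
  obtain ⟨j, hj, haj⟩ := ha
  obtain ⟨k, hk, hbk⟩ := hb
  by_cases hjk : j = k
  · subst hjk
    exact hf j hj haj hbk hab
  · exact hcross j hj k hk hjk a haj b hbk

theorem not_exists_common_vertex_of_mem_active {V J : Type*} {Gc : SimpleGraph J}
    {E : J → Set (Sym2 V)} {A : Set J} (hA : ∀ j k, j ∈ A → Gc.Adj j k → k ∉ A)
    (hoverlap : ∀ j k, j ≠ k → (∃ e ∈ E j, ∃ e' ∈ E k, ∃ v, v ∈ e ∧ v ∈ e') → Gc.Adj j k)
    {j k : J} (hj : j ∈ A) (hk : k ∈ A) (hjk : j ≠ k) {e e' : Sym2 V} (he : e ∈ E j)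
    (he' : e' ∈ E k) : ¬∃ v, v ∈ e ∧ v ∈ e' := fun hv =>
  hA j k hj (hoverlap j k hjk ⟨e, he, e', he', hv⟩) hk

theorem stmt_13_general {V J : Type*} (Gc : SimpleGraph J)
    (E : J → Set (Sym2 V))
    (τ : J → ℕ → Set (Sym2 V)) (hτE : ∀ j t, τ j t ⊆ E j)
    -- each local schedule is a matching in the local graph
    (hmatch : ∀ j t, ∀ e ∈ τ j t, ∀ e' ∈ τ j t, e ≠ e' → ¬∃ v, v ∈ e ∧ v ∈ e')
    (ρ : ℕ → Set J)
    -- (a) neighboring command nodes never simultaneously active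
    (hnoninter : ∀ t j k, j ∈ ρ t → Gc.Adj j k → k ∉ ρ t)
    -- overlapping jurisdictions are adjacent in the command graph
    (hoverlap : ∀ j k, j ≠ k →
      (∃ e ∈ E j, ∃ e' ∈ E k, ∃ v, v ∈ e ∧ v ∈ e') → Gc.Adj j k) :
    -- the merged schedule is a matching in G at every time
    ∀ t, ∀ e ∈ ⋃ j ∈ ρ t, τ j t, ∀ e' ∈ ⋃ j ∈ ρ t, τ j t,
      e ≠ e' → ¬∃ v, v ∈ e ∧ v ∈ e' := fun t =>
  Set.pairwise_biUnion_of_forall_ne (fun j _ => hmatch j t)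
    fun _ hj _ hk hjk _ he _ he' =>
      not_exists_common_vertex_of_mem_active (hnoninter t) hoverlap hj hk hjk
        (hτE _ t he) (hτE _ t he')

theorem stmt_13 {V J : Type*} (G : SimpleGraph V) (Gc : SimpleGraph J)
    (E : J → Set (Sym2 V)) (hE : ∀ j, E j ⊆ G.edgeSet)
    (τ : J → ℕ → Set (Sym2 V)) (hτE : ∀ j t, τ j t ⊆ E j)
    -- each local schedule is a matching in the local graph
    (hmatch : ∀ j t, ∀ e ∈ τ j t, ∀ e' ∈ τ j t, e ≠ e' → ¬∃ v, v ∈ e ∧ v ∈ e')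
    (ρ : ℕ → Set J)
    -- (a) neighboring command nodes never simultaneously active
    (hnoninter : ∀ t j k, j ∈ ρ t → Gc.Adj j k → k ∉ ρ t)
    -- (b) every command node active infinitely often
    (hlive : ∀ j, {t : ℕ | j ∈ ρ t}.Infinite)
    -- overlapping jurisdictions are adjacent in the command graph
    (hoverlap : ∀ j k, j ≠ k →
      (∃ e ∈ E j, ∃ e' ∈ E k, ∃ v, v ∈ e ∧ v ∈ e') → Gc.Adj j k) :
    -- the merged schedule is a matching in G at every time
    ∀ t, ∀ e ∈ ⋃ j ∈ ρ t, τ j t, ∀ e' ∈ ⋃ j ∈ ρ t, τ j t,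
      e ≠ e' → ¬∃ v, v ∈ e ∧ v ∈ e' :=
  stmt_13_general Gc E τ hτE hmatch ρ hnoninter hoverlap
end
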